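/- Antisymmetry of the form ε₋ on homology: let E be a finite set, σ₀, σ₁ permutations of E, m a perfect matching, ρ_{m,c} = (I − ς_{m,c})^{-1}, and H₁ ⊆ ℤ^E the subgroup generated by differences of perfect matchings. Then for all h₁, h₂ ∈ H₁: h₁ᵀ (ρ_{m,0} − ρ_{m,1}) h₂ = − h₂ᵀ (ρ_{m,0} − ρ_{m,1}) h₁. -/

import Mathlib

open Finset Matrix

variable {E : Type*}

/-- A perfect matching of `(E, σ₀, σ₁)`: a `{0,1}`-valued function on `E` such that every
cycle (orbit) of `σ₀` and every cycle of `σ₁` contains exactly one element with value `1`. -/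
def IsPerfectMatching (σ₀ σ₁ : Equiv.Perm E) (m : E → ℤ) : Prop :=
  (∀ e, m e = 0 ∨ m e = 1) ∧
  (∀ e, ∃! e', σ₀.SameCycle e e' ∧ m e' = 1) ∧
  (∀ e, ∃! e', σ₁.SameCycle e e' ∧ m e' = 1)

/-- The "broken" permutation matrix `ς_{m,σ}`: the matrix of the permutation `σ`
(with `(σ e, e)`-entry `1`) in which every column `e` with `m e = 1` is replaced by zero. -/
def brokenPermMatrix [DecidableEq E] (σ : Equiv.Perm E) (m : E → ℤ) : Matrix E E ℤ :=
  Matrix.of fun e' e => if e' = σ e ∧ m e = 0 then 1 else 0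

/-- The matrix `ρ_{m,σ} = (I - ς_{m,σ})⁻¹`. -/
noncomputable def rhoMatrix [Fintype E] [DecidableEq E] (σ : Equiv.Perm E) (m : E → ℤ) :
    Matrix E E ℤ :=
  (1 - brokenPermMatrix σ m)⁻¹

/-- The subgroup `H₁ ⊆ ℤ^E` generated by all differences of perfect matchings. -/
def matchingHomology (σ₀ σ₁ : Equiv.Perm E) : AddSubgroup (E → ℤ) :=
  AddSubgroup.closure
    {x | ∃ m' m'', IsPerfectMatching σ₀ σ₁ m' ∧ IsPerfectMatching σ₀ σ₁ m'' ∧ x = m' - m''}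

/-! Each cycle of `σ` is marked by `m` at its unique element `e₀` with `m e₀ = 1`, and `ς` follows
`σ` except at marked elements, so `ρ = (1 - ς)⁻¹` maps `δ_{e₀}` (as a row) to the indicator of the
cycle of `e₀`. A difference of perfect matchings sums to zero on every cycle, so `ρ h` vanishes at
marked elements for `h ∈ H₁`. As `ς` is a partial isometry that only forgets marked coordinates,
writing `hᵢ = (1 - ς) ρ hᵢ` gives `h₁ ⬝ ρ h₂ + h₂ ⬝ ρ h₁ = h₁ ⬝ h₂` for both `σ = σ₀` and `σ = σ₁`;
subtracting the two identities yields antisymmetry. -/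

def IsCycleTransversal (σ : Equiv.Perm E) (m : E → ℤ) : Prop :=
  (∀ e, m e = 0 ∨ m e = 1) ∧ ∀ e, ∃! e', σ.SameCycle e e' ∧ m e' = 1

theorem IsPerfectMatching.left {σ₀ σ₁ : Equiv.Perm E} {m : E → ℤ}
    (hm : IsPerfectMatching σ₀ σ₁ m) : IsCycleTransversal σ₀ m :=
  ⟨hm.1, hm.2.1⟩

theorem IsPerfectMatching.right {σ₀ σ₁ : Equiv.Perm E} {m : E → ℤ}
    (hm : IsPerfectMatching σ₀ σ₁ m) : IsCycleTransversal σ₁ m :=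
  ⟨hm.1, hm.2.2⟩

section

variable [Fintype E] [DecidableEq E] {σ : Equiv.Perm E} {m : E → ℤ}

def cycleIndicator (σ : Equiv.Perm E) (e₀ : E) : E → ℤ :=
  fun e => if σ.SameCycle e₀ e then 1 else 0

theorem IsCycleTransversal.cycleIndicator_dotProduct (hm : IsCycleTransversal σ m) (e₀ : E) :
    cycleIndicator σ e₀ ⬝ᵥ m = 1 := by
  obtain ⟨u, ⟨hcu, hmu⟩, huniq⟩ := hm.2 e₀
  rw [dotProduct, Finset.sum_eq_single u]
  · simp [cycleIndicator, hcu, hmu]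
  · intro e _ hne
    by_cases hc : σ.SameCycle e₀ e
    · rcases hm.1 e with h | h
      · simp [h]
      · exact absurd (huniq e ⟨hc, h⟩) hne
    · simp [cycleIndicator, hc]
  · simp

theorem brokenPermMatrix_mulVec_apply_perm (σ : Equiv.Perm E) (m x : E → ℤ) (e : E) :
    (brokenPermMatrix σ m *ᵥ x) (σ e) = if m e = 0 then x e else 0 := by
  by_cases hme : m e = 0 <;> simp [mulVec, dotProduct, brokenPermMatrix, ite_and, hme]

theorem vecMul_brokenPermMatrix_apply (σ : Equiv.Perm E) (m x : E → ℤ) (e : E) :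
    (x ᵥ* brokenPermMatrix σ m) e = if m e = 0 then x (σ e) else 0 := by
  by_cases hme : m e = 0 <;> simp [vecMul, dotProduct, brokenPermMatrix, hme]

theorem brokenPermMatrix_pow_mulVec_apply_perm_pow (σ : Equiv.Perm E) (m x : E → ℤ) (k : ℕ)
    (e : E) :
    (brokenPermMatrix σ m ^ k *ᵥ x) ((σ ^ k) e) =
      if ∀ j < k, m ((σ ^ j) e) = 0 then x e else 0 := by
  induction k with
  | zero => simp
  | succ k ih =>
    rw [pow_succ', ← mulVec_mulVec, pow_succ', Equiv.Perm.mul_apply,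
      brokenPermMatrix_mulVec_apply_perm, ih]
    simp only [Nat.forall_lt_succ_right]
    split_ifs <;> tauto

theorem isNilpotent_brokenPermMatrix (hσ : ∀ e, ∃ e', σ.SameCycle e e' ∧ m e' ≠ 0) :
    IsNilpotent (brokenPermMatrix σ m) := by
  refine ⟨orderOf σ, ext_iff_mulVec.2 fun x => funext fun e => ?_⟩
  obtain ⟨e', hc, he'⟩ := hσ e
  obtain ⟨j, hj, rfl⟩ := hc.exists_pow_eq'
  have h := brokenPermMatrix_pow_mulVec_apply_perm_pow σ m x (orderOf σ) e
  rw [pow_orderOf_eq_one, Equiv.Perm.one_apply] at h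
  rw [h, if_neg fun h => he' (h j hj), zero_mulVec, Pi.zero_apply]

theorem IsCycleTransversal.one_sub_brokenPermMatrix_mul_rhoMatrix
    (hm : IsCycleTransversal σ m) : (1 - brokenPermMatrix σ m) * rhoMatrix σ m = 1 := by
  refine mul_nonsing_inv _ ((isUnit_iff_isUnit_det _).1 (IsNilpotent.isUnit_one_sub ?_))
  refine isNilpotent_brokenPermMatrix fun e => ?_
  obtain ⟨e', ⟨hc, he'⟩, -⟩ := hm.2 e
  exact ⟨e', hc, by simp [he']⟩

theorem IsCycleTransversal.single_vecMul_rhoMatrix (hm : IsCycleTransversal σ m) {e₀ : E}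
    (he₀ : m e₀ = 1) : Pi.single e₀ 1 ᵥ* rhoMatrix σ m = cycleIndicator σ e₀ := by
  suffices h : cycleIndicator σ e₀ ᵥ* (1 - brokenPermMatrix σ m) = Pi.single e₀ 1 by
    rw [← h, vecMul_vecMul, hm.one_sub_brokenPermMatrix_mul_rhoMatrix, vecMul_one]
  ext e
  rw [vecMul_sub, vecMul_one, Pi.sub_apply, vecMul_brokenPermMatrix_apply]
  by_cases hc : σ.SameCycle e₀ e
  · have hcσ : σ.SameCycle e₀ (σ e) := Equiv.Perm.sameCycle_apply_right.2 hc
    rcases hm.1 e with hme | hme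
    · have hne : e ≠ e₀ := by rintro rfl; simp [hme] at he₀
      simp [cycleIndicator, hc, hcσ, hme, hne]
    · obtain ⟨u, -, huniq⟩ := hm.2 e₀
      obtain rfl : e = e₀ := (huniq e ⟨hc, hme⟩).trans (huniq e₀ ⟨.refl σ e₀, he₀⟩).symm
      simp [cycleIndicator, hc, he₀]
  · have hcσ : ¬σ.SameCycle e₀ (σ e) := mt Equiv.Perm.sameCycle_apply_right.1 hc
    have hne : e ≠ e₀ := by rintro rfl; exact hc (.refl σ e)
    simp [cycleIndicator, hc, hcσ, hne]

theorem IsCycleTransversal.rhoMatrix_mulVec_apply_eq_zero (hm : IsCycleTransversal σ m)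
    {h : E → ℤ} (hh : ∀ e, cycleIndicator σ e ⬝ᵥ h = 0) {e₀ : E} (he₀ : m e₀ ≠ 0) :
    (rhoMatrix σ m *ᵥ h) e₀ = 0 := by
  have he₀ : m e₀ = 1 := (hm.1 e₀).resolve_left he₀
  rw [← one_mul ((rhoMatrix σ m *ᵥ h) e₀), ← single_dotProduct, dotProduct_mulVec,
    hm.single_vecMul_rhoMatrix he₀, hh]

theorem brokenPermMatrix_mulVec_dotProduct_mulVec (σ : Equiv.Perm E) {m : E → ℤ} (v : E → ℤ)
    {u : E → ℤ} (hu : ∀ e, m e ≠ 0 → u e = 0) :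
    (brokenPermMatrix σ m *ᵥ v) ⬝ᵥ (brokenPermMatrix σ m *ᵥ u) = v ⬝ᵥ u := by
  rw [dotProduct, ← Equiv.sum_comp σ]
  refine Finset.sum_congr rfl fun e _ => ?_
  rw [brokenPermMatrix_mulVec_apply_perm, brokenPermMatrix_mulVec_apply_perm]
  by_cases hme : m e = 0
  · simp [hme]
  · simp [hme, hu e hme]

theorem IsCycleTransversal.dotProduct_rhoMatrix_mulVec_add_swap (hm : IsCycleTransversal σ m)
    (h₁ : E → ℤ) {h₂ : E → ℤ} (hh₂ : ∀ e, cycleIndicator σ e ⬝ᵥ h₂ = 0) :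
    h₁ ⬝ᵥ (rhoMatrix σ m *ᵥ h₂) + h₂ ⬝ᵥ (rhoMatrix σ m *ᵥ h₁) = h₁ ⬝ᵥ h₂ := by
  set ς := brokenPermMatrix σ m
  set u := rhoMatrix σ m *ᵥ h₂
  set v := rhoMatrix σ m *ᵥ h₁
  have hinv : ∀ x, (1 - ς) *ᵥ (rhoMatrix σ m *ᵥ x) = x := fun x => by
    rw [mulVec_mulVec, hm.one_sub_brokenPermMatrix_mul_rhoMatrix, one_mulVec]
  have hς : (ς *ᵥ v) ⬝ᵥ (ς *ᵥ u) = v ⬝ᵥ u := brokenPermMatrix_mulVec_dotProduct_mulVec σ v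
    fun e he => hm.rhoMatrix_mulVec_apply_eq_zero hh₂ he
  rw [← hinv h₁, ← hinv h₂]
  simp only [sub_mulVec, one_mulVec, sub_dotProduct, dotProduct_sub]
  rw [dotProduct_comm u v, dotProduct_comm (ς *ᵥ u) v]
  linarith

end

theorem dotProduct_eq_zero_of_mem_matchingHomology {σ₀ σ₁ : Equiv.Perm E} [Fintype E]
    {w : E → ℤ} {c : ℤ} (hw : ∀ m', IsPerfectMatching σ₀ σ₁ m' → w ⬝ᵥ m' = c) {h : E → ℤ}
    (hh : h ∈ matchingHomology σ₀ σ₁) : w ⬝ᵥ h = 0 := by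
  induction hh using AddSubgroup.closure_induction with
  | mem x hx =>
    obtain ⟨m', m'', hm', hm'', rfl⟩ := hx
    rw [dotProduct_sub, hw m' hm', hw m'' hm'', sub_self]
  | zero => exact dotProduct_zero w
  | add x y _ _ hx hy => rw [dotProduct_add, hx, hy, add_zero]
  | neg x _ hx => rw [dotProduct_neg, hx, neg_zero]

theorem epsMinus_antisymm_general [Fintype E] [DecidableEq E]
    (σ₀ σ₁ : Equiv.Perm E) (m : E → ℤ) (hm : IsPerfectMatching σ₀ σ₁ m)
    (h₁ h₂ : E → ℤ)
    (hh₂ : h₂ ∈ matchingHomology σ₀ σ₁) :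
    h₁ ⬝ᵥ (rhoMatrix σ₀ m - rhoMatrix σ₁ m).mulVec h₂ =
      -(h₂ ⬝ᵥ (rhoMatrix σ₀ m - rhoMatrix σ₁ m).mulVec h₁) := by
  have hsym₀ := hm.left.dotProduct_rhoMatrix_mulVec_add_swap h₁ fun e =>
    dotProduct_eq_zero_of_mem_matchingHomology
      (fun _ hm' => hm'.left.cycleIndicator_dotProduct e) hh₂
  have hsym₁ := hm.right.dotProduct_rhoMatrix_mulVec_add_swap h₁ fun e =>
    dotProduct_eq_zero_of_mem_matchingHomology
      (fun _ hm' => hm'.right.cycleIndicator_dotProduct e) hh₂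
  simp only [sub_mulVec, dotProduct_sub]
  linarith

/-- Antisymmetry of the form `ε₋` given by `ρ_{m,0} - ρ_{m,1}` on the subgroup `H₁`
generated by differences of perfect matchings. -/
theorem epsMinus_antisymm [Fintype E] [DecidableEq E]
    (σ₀ σ₁ : Equiv.Perm E) (m : E → ℤ) (hm : IsPerfectMatching σ₀ σ₁ m)
    (h₁ h₂ : E → ℤ)
    (hh₁ : h₁ ∈ matchingHomology σ₀ σ₁) (hh₂ : h₂ ∈ matchingHomology σ₀ σ₁) :
    h₁ ⬝ᵥ (rhoMatrix σ₀ m - rhoMatrix σ₁ m).mulVec h₂ =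
      -(h₂ ⬝ᵥ (rhoMatrix σ₀ m - rhoMatrix σ₁ m).mulVec h₁) :=
  epsMinus_antisymm_general σ₀ σ₁ m hm h₁ h₂ hh₂
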